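/- arXiv:1305.7501 — 2 statements merged into one kernel-verified Lean document; each statement's English description precedes it below -/
import Mathlib

section
/- Let (N,σ) be an ordered abelian group with order-automorphism σ containing ℚ with σ restricting to multiplication by a rational q > 1 on ℚ, and fix a rational r with 1 < r < q and a positive rational a. Set a_i = q^i a. If y₀ ∈ N satisfies a₀ < y₀ and σ(y₀) = r·y₀ (meaning σ(y₀) equals the unique element with denominator-scaling by r, i.e., in the divisible hull), then y₀ > a_L for every L ∈ ℕ. -/
/-! Apply `σᵏ` to `a < y₀`: this gives `qᵏ • a < rᵏ • y₀`, i.e. `(q / r)ᵏ • a < y₀` for every `k`.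
Since `q / r > 1`, the powers `(q / r)ᵏ` eventually exceed any `q ^ L`. -/

theorem iterate_map_eq_pow_smul_of_map_eq_smul {M F : Type*} [AddCommGroup M] [Module ℚ M]
    [FunLike F M M] [AddMonoidHomClass F M M] (f : F) {c : ℚ} {x : M} (h : f x = c • x)
    (k : ℕ) : f^[k] x = c ^ k • x := by
  induction k with
  | zero => simp
  | succ k ih =>
    rw [Function.iterate_succ_apply', ih, map_rat_smul, h, smul_smul, pow_succ]

theorem iterate_eq_pow_smul_of_map_pow_smul {R M : Type*} [Monoid R] [MulAction R M]
    (f : M → M) {q : R} {a : M} (h : ∀ i : ℕ, f (q ^ i • a) = q ^ (i + 1) • a) (k : ℕ) :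
    f^[k] a = q ^ k • a := by
  induction k with
  | zero => simp
  | succ k ih => rw [Function.iterate_succ_apply', ih, h k]

theorem div_pow_smul_lt_of_iterate_eq_pow_smul {N : Type*} [AddCommGroup N] [PartialOrder N]
    [Module ℚ N] [PosSMulStrictMono ℚ N] [PosSMulReflectLT ℚ N]
    {f : N → N} (hf : StrictMono f) {q r : ℚ} (hr : 0 < r) {a y : N}
    (hfa : ∀ k : ℕ, f^[k] a = q ^ k • a) (hfy : ∀ k : ℕ, f^[k] y = r ^ k • y) (hay : a < y)
    (k : ℕ) : (q / r) ^ k • a < y := by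
  have hlt : q ^ k • a < r ^ k • y := by
    simpa only [hfa, hfy] using hf.iterate k hay
  rwa [div_pow, div_eq_inv_mul, mul_smul, inv_smul_lt_iff_of_pos (pow_pos hr k)]

/-- In a divisible ordered abelian group N with order-automorphism σ, with
1 < r < q in ℚ, a > 0 with σ(q^i • a) = q^(i+1) • a for all i, any y₀ > a with
σ y₀ = r • y₀ lies above q^L • a for every L. -/
theorem stmt_6 {N : Type*} [AddCommGroup N] [LinearOrder N] [IsOrderedAddMonoid N] [Module ℚ N] [PosSMulStrictMono ℚ N] [PosSMulReflectLT ℚ N]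
    (σ : N ≃+ N) (hσ : StrictMono σ)
    (q r : ℚ) (hr : 1 < r) (hrq : r < q)
    (a : N) (ha : 0 < a)
    (hqa : ∀ i : ℕ, σ (q ^ i • a) = q ^ (i + 1) • a)
    (y₀ : N) (hy₀ : a < y₀) (hσy : σ y₀ = r • y₀) :
    ∀ L : ℕ, q ^ L • a < y₀ := by
  intro L
  have hr₀ : 0 < r := one_pos.trans hr
  obtain ⟨k, hk⟩ := pow_unbounded_of_one_lt (q ^ L) ((one_lt_div hr₀).mpr hrq)
  calc q ^ L • a ≤ (q / r) ^ k • a := smul_le_smul_of_nonneg_right hk.le ha.le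
    _ < y₀ := div_pow_smul_lt_of_iterate_eq_pow_smul hσ hr₀
        (iterate_eq_pow_smul_of_map_pow_smul σ hqa)
        (iterate_map_eq_pow_smul_of_map_eq_smul σ hσy) hy₀ k
end

section
/- Let G = ⊕_{i∈ω} H_i be an ω-sum of ordered abelian groups, and fix ℓ ∈ ω. For b, c ∈ G define b⁻ (resp. c⁺) as the truncations of b to coordinates < ℓ (resp. of c to coordinates ≥ ℓ), and the hybrid b⁻c⁺ = b⁻ + c⁺. If c > u for every u ∈ U_ℓ = ⊕_{j<ℓ} H_j (and G is 2-divisible so c/2 makes sense), then b⁻c⁺ > c/2 for every b ∈ G. -/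
/-!
Comparing with `0 ∈ U_ℓ` gives the top nonzero coordinate `k` of `c`, with `c k > 0`.
Since `revlex` is irreflexive, `c ∉ U_ℓ`, so `ℓ ≤ k`. Hence `b⁻c⁺` agrees with `c` from `k` on,
and `c/2` is `0` above `k` and `0 < c k / 2 < c k` at `k`.
-/

/-- Reverse lexicographic strict order on ω-indexed families. -/
def revlex {H : ℕ → Type*} [∀ i, LinearOrder (H i)] (f g : ∀ i, H i) : Prop :=
  ∃ k, f k < g k ∧ ∀ j, k < j → f j = g j

theorem revlex_irrefl {H : ℕ → Type*} [∀ i, LinearOrder (H i)] (f : ∀ i, H i) :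
    ¬ revlex f f :=
  fun ⟨_, hk, _⟩ => lt_irrefl _ hk

section OrderedGroup

variable {α : Type*} [AddCommGroup α] [LinearOrder α] [IsOrderedAddMonoid α] {a b : α}

theorem lt_of_add_self_eq_of_pos (hab : a + a = b) (hb : 0 < b) : a < b := by
  have ha : 0 < a := pos_add_self_iff.mp (hab ▸ hb)
  exact hab ▸ lt_add_of_pos_left a ha

theorem eq_zero_of_add_self_eq_zero (ha : a + a = 0) : a = 0 :=
  two_nsmul_eq_zero.mp ((two_nsmul a).trans ha)

end OrderedGroup

/-- In a (2-divisible) ω-sum, if c is greater than every element of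
U_ℓ = ⊕_{j<ℓ} H_j, then the hybrid b⁻c⁺ is greater than c/2 for every b. -/
theorem stmt_18 {H : ℕ → Type*} [∀ i, AddCommGroup (H i)] [∀ i, LinearOrder (H i)]
    [∀ i, IsOrderedAddMonoid (H i)]
    (ℓ : ℕ) (b c c2 : ∀ i, H i)
    (hc2 : ∀ i, c2 i + c2 i = c i)
    (hc : ∀ u : ∀ i, H i, (∀ j, ℓ ≤ j → u j = 0) → revlex u c) :
    revlex c2 (fun i => if i < ℓ then b i else c i) := by
  obtain ⟨k, hck, hc_top⟩ := hc 0 fun _ _ => rfl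
  have hℓk : ℓ ≤ k := by
    by_contra! hkℓ
    exact revlex_irrefl c (hc c fun j hj => (hc_top j (hkℓ.trans_le hj)).symm)
  refine ⟨k, ?_, fun j hj => ?_⟩
  · simpa [hℓk.not_gt] using lt_of_add_self_eq_of_pos (hc2 k) hck
  · have hcj : c j = 0 := (hc_top j hj).symm
    simp only [(hℓk.trans hj.le).not_gt, if_false, hcj]
    exact eq_zero_of_add_self_eq_zero ((hc2 j).trans hcj)
end
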